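/- arXiv:2404.06233 — 7 statements merged into one kernel-verified Lean document; each statement's English description precedes it below -/
import Mathlib

section
/- In an MAV-algebra, the join ⊕ (defined by x ⊕ y = ¬(¬x ∧ ¬y)) is duoidal over ◁: (w ◁ x) ⊕ (y ◁ z) ≤ (w ⊕ y) ◁ (x ⊕ z). -/
/-- In an MAV-algebra, the join `⊕` (defined by
`x ⊕ y = ¬(¬x ⊓ ¬y)`) is duoidal over `◁`:
`(w ◁ x) ⊕ (y ◁ z) ≤ (w ⊕ y) ◁ (x ⊕ z)`. -/
theorem stmt5 {A : Type*} [SemilatticeInf A]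
    (tens : A → A → A) (tri : A → A → A) (I : A) (neg : A → A)
    (tens_mono : ∀ {x x' y y'}, x ≤ x' → y ≤ y' → tens x y ≤ tens x' y')
    (tens_assoc : ∀ x y z, tens (tens x y) z = tens x (tens y z))
    (tens_comm : ∀ x y, tens x y = tens y x)
    (tens_unit : ∀ x, tens x I = x)
    (neg_anti : ∀ {x y}, x ≤ y → neg y ≤ neg x)
    (neg_invol : ∀ x, neg (neg x) = x)
    (adj : ∀ x y z, tens x y ≤ neg z ↔ x ≤ neg (tens y z))
    (mix : neg I = I)
    (tri_mono : ∀ {x x' y y'}, x ≤ x' → y ≤ y' → tri x y ≤ tri x' y')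
    (tri_assoc : ∀ x y z, tri (tri x y) z = tri x (tri y z))
    (tri_unitr : ∀ x, tri x I = x)
    (tri_unitl : ∀ x, tri I x = x)
    (tri_selfdual : ∀ x y, neg (tri x y) = tri (neg x) (neg y))
    (duoidal : ∀ w x y z, tens (tri w x) (tri y z) ≤ tri (tens w y) (tens x z)) :
    ∀ w x y z,
      neg (neg (tri w x) ⊓ neg (tri y z)) ≤
        tri (neg (neg w ⊓ neg y)) (neg (neg x ⊓ neg z)) := by
  intro w x y z
  -- x ≤ x ⊕ y
  have le_plus_l : ∀ a b : A, a ≤ neg (neg a ⊓ neg b) := fun a b => by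
    have := neg_anti (inf_le_left (a := neg a) (b := neg b))
    rwa [neg_invol] at this
  have le_plus_r : ∀ a b : A, b ≤ neg (neg a ⊓ neg b) := fun a b => by
    have := neg_anti (inf_le_right (a := neg a) (b := neg b))
    rwa [neg_invol] at this
  have h1 : tri w x ≤ tri (neg (neg w ⊓ neg y)) (neg (neg x ⊓ neg z)) :=
    tri_mono (le_plus_l w y) (le_plus_l x z)
  have h2 : tri y z ≤ tri (neg (neg w ⊓ neg y)) (neg (neg x ⊓ neg z)) :=
    tri_mono (le_plus_r w y) (le_plus_r x z)
  have := neg_anti (le_inf (neg_anti h1) (neg_anti h2))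
  rwa [neg_invol] at this
end

section
/- Let (•, i) be a commutative pomonoid on (A, ≤) that distributes over a monotone binary operation + (i.e., (x + y) • z ≤ (x • z) + (y • z)). Then F •⁺ G := α(UF •̂ UG) and i⁺ := α(î) form a residuated commutative pomonoid on the poset of +-closed lower sets, and η⁺(x • y) = η⁺(x) •⁺ η⁺(y). -/
/-- `Sums p F s` holds when `s` is a finite `+`-combination of elements of `F`. -/
inductive Sums {A : Type*} (p : A → A → A) (F : Set A) : A → Prop
  | leaf {x : A} : x ∈ F → Sums p F x
  | node {x y : A} : Sums p F x → Sums p F y → Sums p F (p x y)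

/-- Closure of a set under down-closure and finite `+`-combinations. -/
def alpha {A : Type*} [LE A] (p : A → A → A) (F : Set A) : Set A :=
  { x | ∃ s, Sums p F s ∧ x ≤ s }

/-- A set is `+`-closed if it is closed under `+`. -/
def PlusClosed {A : Type*} (p : A → A → A) (F : Set A) : Prop :=
  ∀ x ∈ F, ∀ y ∈ F, p x y ∈ F

/-- The Day product of two subsets. -/
def day {A : Type*} [LE A] (op : A → A → A) (F G : Set A) : Set A :=
  { z | ∃ x ∈ F, ∃ y ∈ G, z ≤ op x y }

/-- The principal lower set. -/
def eta {A : Type*} [LE A] (x : A) : Set A := { y | y ≤ x }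

/-- The `+`-closed Day product. -/
def dayPlus {A : Type*} [LE A] (p op : A → A → A) (F G : Set A) : Set A :=
  alpha p (day op F G)

/-- The residual of lower sets. -/
def resid {A : Type*} [LE A] (op : A → A → A) (F G : Set A) : Set A :=
  { x | ∀ y ∈ F, ∀ z, z ≤ op x y → z ∈ G }

set_option linter.unusedSectionVars false

section Aux
variable {A : Type*} [PartialOrder A] {p op : A → A → A} {F G H : Set A}

lemma sums_mono (h : F ⊆ G) : ∀ {s}, Sums p F s → Sums p G s := by
  intro s hs
  induction hs with
  | leaf hx => exact Sums.leaf (h hx)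
  | node _ _ ih1 ih2 => exact Sums.node ih1 ih2

lemma alpha_mono (h : F ⊆ G) : alpha p F ⊆ alpha p G := by
  rintro x ⟨s, hs, hx⟩; exact ⟨s, sums_mono h hs, hx⟩

lemma subset_alpha : F ⊆ alpha p F := fun x hx => ⟨x, Sums.leaf hx, le_refl x⟩

lemma alpha_lower : IsLowerSet (alpha p F) := by
  rintro a b hba ⟨s, hs, ha⟩; exact ⟨s, hs, hba.trans ha⟩

lemma alpha_plusClosed (p_mono : ∀ {x x' y y' : A}, x ≤ x' → y ≤ y' → p x y ≤ p x' y') :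
    PlusClosed p (alpha p F) := by
  rintro x ⟨s, hs, hx⟩ y ⟨t, ht, hy⟩
  exact ⟨p s t, Sums.node hs ht, p_mono hx hy⟩

lemma sums_alpha_bound (p_mono : ∀ {x x' y y' : A}, x ≤ x' → y ≤ y' → p x y ≤ p x' y') :
    ∀ {s}, Sums p (alpha p F) s → ∃ t, Sums p F t ∧ s ≤ t := by
  intro s hs
  induction hs with
  | leaf hx => exact hx
  | node _ _ ih1 ih2 =>
    obtain ⟨t1, ht1, h1⟩ := ih1
    obtain ⟨t2, ht2, h2⟩ := ih2
    exact ⟨p t1 t2, Sums.node ht1 ht2, p_mono h1 h2⟩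

lemma alpha_alpha (p_mono : ∀ {x x' y y' : A}, x ≤ x' → y ≤ y' → p x y ≤ p x' y') :
    alpha p (alpha p F) = alpha p F := by
  apply Set.Subset.antisymm
  · rintro x ⟨s, hs, hx⟩
    obtain ⟨t, ht, hst⟩ := sums_alpha_bound p_mono hs
    exact ⟨t, ht, hx.trans hst⟩
  · exact subset_alpha

lemma alpha_eq_self (hL : IsLowerSet F) (hP : PlusClosed p F) : alpha p F = F := by
  have key : ∀ s, Sums p F s → s ∈ F := by
    intro s hs
    induction hs with
    | leaf h => exact h
    | node _ _ ih1 ih2 => exact hP _ ih1 _ ih2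
  apply Set.Subset.antisymm
  · rintro x ⟨s, hs, hx⟩
    exact hL hx (key s hs)
  · exact subset_alpha

lemma day_mono {F' G' : Set A} (hF : F ⊆ F') (hG : G ⊆ G') : day op F G ⊆ day op F' G' := by
  rintro z ⟨x, hx, y, hy, hz⟩; exact ⟨x, hF hx, y, hG hy, hz⟩

lemma day_comm (op_comm : ∀ x y : A, op x y = op y x) : day op F G = day op G F := by
  ext z
  constructor <;> rintro ⟨x, hx, y, hy, hz⟩ <;> exact ⟨y, hy, x, hx, hz.trans (op_comm x y).le⟩

lemma day_assoc
    (op_mono : ∀ {x x' y y' : A}, x ≤ x' → y ≤ y' → op x y ≤ op x' y')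
    (op_assoc : ∀ x y z : A, op (op x y) z = op x (op y z)) :
    day op (day op F G) H = day op F (day op G H) := by
  ext z
  constructor
  · rintro ⟨w, ⟨x, hx, y, hy, hw⟩, h, hh, hz⟩
    exact ⟨x, hx, op y h, ⟨y, hy, h, hh, le_refl _⟩,
      (hz.trans (op_mono hw (le_refl h))).trans (op_assoc x y h).le⟩
  · rintro ⟨x, hx, w, ⟨y, hy, h, hh, hw⟩, hz⟩
    exact ⟨op x y, ⟨x, hx, y, hy, le_refl _⟩, h, hh,
      (hz.trans (op_mono (le_refl x) hw)).trans (op_assoc x y h).ge⟩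

lemma op_sums_mem
    (p_mono : ∀ {x x' y y' : A}, x ≤ x' → y ≤ y' → p x y ≤ p x' y')
    (op_comm : ∀ x y : A, op x y = op y x)
    (distrib : ∀ x y z : A, op (p x y) z ≤ p (op x z) (op y z))
    {x : A} (hx : x ∈ F) : ∀ {t}, Sums p G t → op x t ∈ alpha p (day op F G) := by
  intro t ht
  induction ht with
  | leaf hy => exact subset_alpha ⟨x, hx, _, hy, le_refl _⟩
  | node _ _ ih1 ih2 =>
    refine alpha_lower ?_ (alpha_plusClosed p_mono _ ih1 _ ih2)
    calc op x (p _ _) = op (p _ _) x := op_comm _ _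
    _ ≤ p (op _ x) (op _ x) := distrib _ _ _
    _ = p (op x _) (op x _) := by rw [op_comm _ x, op_comm _ x]

lemma day_alpha_right
    (p_mono : ∀ {x x' y y' : A}, x ≤ x' → y ≤ y' → p x y ≤ p x' y')
    (op_mono : ∀ {x x' y y' : A}, x ≤ x' → y ≤ y' → op x y ≤ op x' y')
    (op_comm : ∀ x y : A, op x y = op y x)
    (distrib : ∀ x y z : A, op (p x y) z ≤ p (op x z) (op y z)) :
    day op F (alpha p G) ⊆ alpha p (day op F G) := by
  rintro z ⟨x, hx, y, ⟨t, ht, hy⟩, hz⟩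
  exact alpha_lower (hz.trans (op_mono (le_refl x) hy))
    (op_sums_mem p_mono op_comm distrib hx ht)

lemma alpha_day_alpha_right
    (p_mono : ∀ {x x' y y' : A}, x ≤ x' → y ≤ y' → p x y ≤ p x' y')
    (op_mono : ∀ {x x' y y' : A}, x ≤ x' → y ≤ y' → op x y ≤ op x' y')
    (op_comm : ∀ x y : A, op x y = op y x)
    (distrib : ∀ x y z : A, op (p x y) z ≤ p (op x z) (op y z)) :
    alpha p (day op F (alpha p G)) = alpha p (day op F G) := by
  apply Set.Subset.antisymm
  · intro z hz
    have := alpha_mono (day_alpha_right p_mono op_mono op_comm distrib (F := F) (G := G)) hz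
    rwa [alpha_alpha p_mono] at this
  · exact alpha_mono (day_mono (le_refl F) subset_alpha)

lemma alpha_day_alpha_left
    (p_mono : ∀ {x x' y y' : A}, x ≤ x' → y ≤ y' → p x y ≤ p x' y')
    (op_mono : ∀ {x x' y y' : A}, x ≤ x' → y ≤ y' → op x y ≤ op x' y')
    (op_comm : ∀ x y : A, op x y = op y x)
    (distrib : ∀ x y z : A, op (p x y) z ≤ p (op x z) (op y z)) :
    alpha p (day op (alpha p F) G) = alpha p (day op F G) := by
  rw [day_comm op_comm, alpha_day_alpha_right p_mono op_mono op_comm distrib,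
    day_comm op_comm]

end Aux

/-- For a commutative pomonoid `(•, i)` distributing over `+`,
`F •⁺ G := α(F •̂ G)` and `i⁺ := α(î)` form a residuated commutative pomonoid on
`+`-closed lower sets, and `η⁺(x • y) = η⁺(x) •⁺ η⁺(y)`. -/

theorem stmt12 {A : Type*} [PartialOrder A]
    (op : A → A → A) (i : A) (p : A → A → A)
    (p_mono : ∀ {x x' y y'}, x ≤ x' → y ≤ y' → p x y ≤ p x' y')
    (op_mono : ∀ {x x' y y'}, x ≤ x' → y ≤ y' → op x y ≤ op x' y')
    (op_assoc : ∀ x y z, op (op x y) z = op x (op y z))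
    (op_comm : ∀ x y, op x y = op y x)
    (op_unit : ∀ x, op x i = x)
    (distrib : ∀ x y z, op (p x y) z ≤ p (op x z) (op y z)) :
    (∀ F G : Set A, IsLowerSet F → IsLowerSet G →
      IsLowerSet (dayPlus p op F G) ∧ PlusClosed p (dayPlus p op F G)) ∧
    (IsLowerSet (alpha p (eta i)) ∧ PlusClosed p (alpha p (eta i))) ∧
    (∀ F F' G G' : Set A, F ⊆ F' → G ⊆ G' → dayPlus p op F G ⊆ dayPlus p op F' G') ∧
    (∀ F G : Set A, dayPlus p op F G = dayPlus p op G F) ∧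
    (∀ F G H : Set A, IsLowerSet F → PlusClosed p F → IsLowerSet G → PlusClosed p G →
      IsLowerSet H → PlusClosed p H →
      dayPlus p op (dayPlus p op F G) H = dayPlus p op F (dayPlus p op G H)) ∧
    (∀ F : Set A, IsLowerSet F → PlusClosed p F →
      dayPlus p op F (alpha p (eta i)) = F) ∧
    (∀ F G H : Set A, IsLowerSet F → PlusClosed p F → IsLowerSet G → PlusClosed p G →
      IsLowerSet H → PlusClosed p H →
      (dayPlus p op F G ⊆ H ↔ F ⊆ resid op G H)) ∧
    (∀ x y : A, alpha p (eta (op x y)) =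
      dayPlus p op (alpha p (eta x)) (alpha p (eta y))) := by

  refine ⟨fun F G _ _ => ⟨alpha_lower, alpha_plusClosed p_mono⟩,
    ⟨alpha_lower, alpha_plusClosed p_mono⟩,
    fun F F' G G' hF hG => alpha_mono (day_mono hF hG),
    fun F G => by unfold dayPlus; rw [day_comm op_comm],
    ?_, ?_, ?_, ?_⟩
  · intro F G H _ _ _ _ _ _
    unfold dayPlus
    rw [alpha_day_alpha_left p_mono op_mono op_comm distrib,
      alpha_day_alpha_right p_mono op_mono op_comm distrib,
      day_assoc op_mono op_assoc]
  · intro F hL hP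
    unfold dayPlus
    rw [alpha_day_alpha_right p_mono op_mono op_comm distrib]
    have hdu : day op F (eta i) = F := by
      apply Set.Subset.antisymm
      · rintro z ⟨x, hx, y, hy, hz⟩
        exact hL (hz.trans ((op_mono (le_refl x) hy).trans (op_unit x).le)) hx
      · intro x hx
        exact ⟨x, hx, i, le_refl i, (op_unit x).ge⟩
    rw [hdu, alpha_eq_self hL hP]
  · intro F G H _ _ _ _ hHL hHP
    constructor
    · intro h x hx y hy z hz
      exact h (subset_alpha ⟨x, hx, y, hy, hz⟩)
    · intro h z hz
      rw [← alpha_eq_self hHL hHP]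
      refine alpha_mono ?_ hz
      rintro w ⟨x, hx, y, hy, hw⟩
      exact h hx y hy w hw
  · intro x y
    have hd : day op (eta x) (eta y) = eta (op x y) := by
      apply Set.Subset.antisymm
      · rintro z ⟨a, ha, b, hb, hz⟩
        exact hz.trans (op_mono ha hb)
      · intro z hz
        exact ⟨x, le_refl x, y, le_refl y, hz⟩
    unfold dayPlus
    rw [alpha_day_alpha_left p_mono op_mono op_comm distrib,
      alpha_day_alpha_right p_mono op_mono op_comm distrib, hd]
end

section
/- Let (◁, j) be a pomonoid on (A, ≤) with monotone binary + satisfying (w ◁ x) + (y ◁ z) ≤ (w + y) ◁ (x + z) and j + j ≤ j. Then the Day product F ◁̂ G = { z | ∃ x ∈ F, y ∈ G, z ≤ x ◁ y } of +-closed lower sets F, G is itself +-closed, η(j) is +-closed, and these give a pomonoid on the poset of +-closed lower sets with η⁺(x ◁ y) ⊆ η⁺(x) ◁̂ η⁺(y). -/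
/-- For a pomonoid `(◁, j)` with `+` duoidal over it and
`j + j ≤ j`, the Day product of `+`-closed lower sets is `+`-closed, `η(j)` is
`+`-closed, and these give a pomonoid on `+`-closed lower sets with
`η⁺(x ◁ y) ⊆ η⁺(x) ◁̂ η⁺(y)`. -/
theorem stmt13 {A : Type*} [PartialOrder A]
    (tri : A → A → A) (j : A) (p : A → A → A)
    (p_mono : ∀ {x x' y y'}, x ≤ x' → y ≤ y' → p x y ≤ p x' y')
    (tri_mono : ∀ {x x' y y'}, x ≤ x' → y ≤ y' → tri x y ≤ tri x' y')
    (tri_assoc : ∀ x y z, tri (tri x y) z = tri x (tri y z))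
    (tri_unitr : ∀ x, tri x j = x)
    (tri_unitl : ∀ x, tri j x = x)
    (duoidal : ∀ w x y z, p (tri w x) (tri y z) ≤ tri (p w y) (p x z))
    (j_plus : p j j ≤ j) :
    (∀ F G : Set A, IsLowerSet F → PlusClosed p F → IsLowerSet G → PlusClosed p G →
      IsLowerSet (day tri F G) ∧ PlusClosed p (day tri F G)) ∧
    (IsLowerSet (eta j) ∧ PlusClosed p (eta j)) ∧
    (∀ F F' G G' : Set A, F ⊆ F' → G ⊆ G' → day tri F G ⊆ day tri F' G') ∧
    (∀ F G H : Set A, IsLowerSet F → IsLowerSet G → IsLowerSet H →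
      day tri (day tri F G) H = day tri F (day tri G H)) ∧
    (∀ F : Set A, IsLowerSet F → day tri F (eta j) = F ∧ day tri (eta j) F = F) ∧
    (∀ x y : A, alpha p (eta (tri x y)) ⊆
      day tri (alpha p (eta x)) (alpha p (eta y))) := by
  refine ⟨?_, ⟨?_, ?_⟩, ?_, ?_, ?_, ?_⟩
  · intro F G _ hFp _ hGp
    constructor
    · intro a b hba ⟨x, hx, y, hy, hab⟩
      exact ⟨x, hx, y, hy, le_trans hba hab⟩
    · rintro z ⟨a, ha, b, hb, hz⟩ z' ⟨a', ha', b', hb', hz'⟩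
      exact ⟨p a a', hFp a ha a' ha', p b b', hGp b hb b' hb',
        le_trans (p_mono hz hz') (duoidal a b a' b')⟩
  · intro a b hba h; exact le_trans hba h
  · intro x hx y hy; exact le_trans (p_mono hx hy) j_plus
  · rintro F F' G G' hF hG z ⟨a, ha, b, hb, hz⟩
    exact ⟨a, hF ha, b, hG hb, hz⟩
  · intro F G H _ _ _
    ext z
    constructor
    · rintro ⟨w, ⟨a, ha, b, hb, hw⟩, c, hc, hz⟩
      exact ⟨a, ha, tri b c, ⟨b, hb, c, hc, le_refl _⟩,
        le_trans hz (by rw [← tri_assoc]; exact tri_mono hw (le_refl c))⟩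
    · rintro ⟨a, ha, w, ⟨b, hb, c, hc, hw⟩, hz⟩
      exact ⟨tri a b, ⟨a, ha, b, hb, le_refl _⟩, c, hc,
        le_trans hz (by rw [tri_assoc]; exact tri_mono (le_refl a) hw)⟩
  · intro F hF
    constructor
    · ext z
      constructor
      · rintro ⟨a, ha, b, hb, hz⟩
        exact hF (le_trans hz ((tri_mono (le_refl a) hb).trans (tri_unitr a).le)) ha
      · intro hz
        exact ⟨z, hz, j, le_refl j, (tri_unitr z).ge⟩
    · ext z
      constructor
      · rintro ⟨a, ha, b, hb, hz⟩
        exact hF (le_trans hz ((tri_mono ha (le_refl b)).trans (tri_unitl b).le)) hb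
      · intro hz
        exact ⟨j, le_refl j, z, hz, (tri_unitl z).ge⟩
  · rintro x y z ⟨s, hs, hz⟩
    have key : ∀ s, Sums p (eta (tri x y)) s →
        ∃ u v, Sums p (eta x) u ∧ Sums p (eta y) v ∧ s ≤ tri u v := by
      intro s hs
      induction hs with
      | leaf h => exact ⟨x, y, Sums.leaf (le_refl x), Sums.leaf (le_refl y), h⟩
      | node _ _ ih1 ih2 =>
        obtain ⟨u, v, hu, hv, h1⟩ := ih1
        obtain ⟨u', v', hu', hv', h2⟩ := ih2
        exact ⟨p u u', p v v', Sums.node hu hu', Sums.node hv hv',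
          le_trans (p_mono h1 h2) (duoidal u v u' v')⟩
    obtain ⟨u, v, hu, hv, h⟩ := key s hs
    exact ⟨u, ⟨u, hu, le_refl u⟩, v, ⟨v, hv, le_refl v⟩, le_trans hz h⟩
end

section
/- Let (A, ≤, •, i, ⊸) be a poset with a residuated commutative pomonoid and binary meets, and k ∈ A. Then Chu(A, k), whose elements are pairs (a⁺, a⁻) with a⁺ • a⁻ ≤ k ordered by (a⁺,a⁻) ⊑ (b⁺,b⁻) iff a⁺ ≤ b⁺ and b⁻ ≤ a⁻, is a *-autonomous partial order with (a⁺,a⁻) ⊗ (b⁺,b⁻) = (a⁺ • b⁺, (b⁺ ⊸ a⁻) ∧ (a⁺ ⊸ b⁻)), unit (i, k), and ¬(a⁺,a⁻) = (a⁻,a⁺). -/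
/-- Well-definedness of a Chu pair: `a⁺ • a⁻ ≤ k`. -/
def ChuWD {A : Type*} [LE A] (op : A → A → A) (k : A) (a : A × A) : Prop :=
  op a.1 a.2 ≤ k

/-- The Chu ordering: `(a⁺,a⁻) ⊑ (b⁺,b⁻)` iff `a⁺ ≤ b⁺` and `b⁻ ≤ a⁻`. -/
def ChuLE {A : Type*} [LE A] (a b : A × A) : Prop :=
  a.1 ≤ b.1 ∧ b.2 ≤ a.2

/-- The Chu tensor. -/
def ChuTens {A : Type*} [SemilatticeInf A] (op res : A → A → A) (a b : A × A) : A × A :=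
  (op a.1 b.1, res b.1 a.2 ⊓ res a.1 b.2)

/-- Chu negation. -/
def ChuNeg {A : Type*} (a : A × A) : A × A := (a.2, a.1)

/-- `Chu(A, k)` is a *-autonomous partial order with the given
tensor, unit `(i, k)` and negation `¬(a⁺,a⁻) = (a⁻,a⁺)`. -/
theorem stmt14 {A : Type*} [SemilatticeInf A]
    (op : A → A → A) (i : A) (res : A → A → A) (k : A)
    (op_mono : ∀ {x x' y y'}, x ≤ x' → y ≤ y' → op x y ≤ op x' y')
    (op_assoc : ∀ x y z, op (op x y) z = op x (op y z))
    (op_comm : ∀ x y, op x y = op y x)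
    (op_unit : ∀ x, op x i = x)
    (residuated : ∀ x y z, op x y ≤ z ↔ x ≤ res y z) :
    -- ChuLE is a partial order on well-defined pairs
    (∀ a : A × A, ChuLE a a) ∧
    (∀ a b c : A × A, ChuLE a b → ChuLE b c → ChuLE a c) ∧
    (∀ a b : A × A, ChuLE a b → ChuLE b a → a = b) ∧
    -- tensor, unit and negation are well-defined on Chu pairs
    (∀ a b : A × A, ChuWD op k a → ChuWD op k b → ChuWD op k (ChuTens op res a b)) ∧
    ChuWD op k (i, k) ∧
    (∀ a : A × A, ChuWD op k a → ChuWD op k (ChuNeg a)) ∧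
    -- (⊗, (i,k)) is a commutative pomonoid for the Chu ordering
    (∀ a a' b b' : A × A, ChuLE a a' → ChuLE b b' →
      ChuLE (ChuTens op res a b) (ChuTens op res a' b')) ∧
    (∀ a b : A × A, ChuTens op res a b = ChuTens op res b a) ∧
    (∀ a b c : A × A, ChuWD op k a → ChuWD op k b → ChuWD op k c →
      ChuLE (ChuTens op res (ChuTens op res a b) c)
            (ChuTens op res a (ChuTens op res b c)) ∧
      ChuLE (ChuTens op res a (ChuTens op res b c))
            (ChuTens op res (ChuTens op res a b) c)) ∧
    (∀ a : A × A, ChuWD op k a →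
      ChuLE (ChuTens op res a (i, k)) a ∧ ChuLE a (ChuTens op res a (i, k))) ∧
    -- negation is an antitone involution satisfying the *-autonomy condition
    (∀ a b : A × A, ChuLE a b → ChuLE (ChuNeg b) (ChuNeg a)) ∧
    (∀ a : A × A, ChuNeg (ChuNeg a) = a) ∧
    (∀ a b c : A × A, ChuWD op k a → ChuWD op k b → ChuWD op k c →
      (ChuLE (ChuTens op res a b) (ChuNeg c) ↔
        ChuLE a (ChuNeg (ChuTens op res b c)))) := by

  have ev : ∀ x y, op (res x y) x ≤ y := fun x y => (residuated _ _ _).mpr le_rfl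
  have mono2 : ∀ (x : A) {y y' : A}, y ≤ y' → res x y ≤ res x y' := fun x {y y'} h =>
    (residuated _ _ _).mp ((ev x y).trans h)
  have anti1 : ∀ {x x' : A} (y : A), x ≤ x' → res x' y ≤ res x y := fun {x x'} y h =>
    (residuated _ _ _).mp ((op_mono le_rfl h).trans (ev x' y))
  have curry : ∀ x y z : A, res (op x y) z = res x (res y z) := by
    intro x y z
    apply le_antisymm
    · refine (residuated _ _ _).mp ((residuated _ _ _).mp ?_)
      rw [op_assoc]; exact ev _ _
    · refine (residuated _ _ _).mp ?_
      rw [← op_assoc]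
      exact (op_mono (ev x (res y z)) le_rfl).trans (ev y z)
  have res_inf : ∀ x y z : A, res x (y ⊓ z) = res x y ⊓ res x z := by
    intro x y z
    apply le_antisymm
    · exact le_inf (mono2 x inf_le_left) (mono2 x inf_le_right)
    · refine (residuated _ _ _).mp (le_inf ?_ ?_)
      · exact (op_mono inf_le_left le_rfl).trans (ev x y)
      · exact (op_mono inf_le_right le_rfl).trans (ev x z)
  have res_unit : ∀ y : A, res i y = y := by
    intro y
    apply le_antisymm
    · have := ev i y; rwa [op_unit] at this
    · exact (residuated _ _ _).mp (le_of_eq (op_unit y))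
  refine ⟨fun a => ⟨le_rfl, le_rfl⟩,
    fun a b c hab hbc => ⟨hab.1.trans hbc.1, hbc.2.trans hab.2⟩,
    fun a b hab hba => Prod.ext (le_antisymm hab.1 hba.1) (le_antisymm hba.2 hab.2),
    ?_, ?_, ?_, ?_, ?_, ?_, ?_, ?_, ?_, ?_⟩
  · intro a b ha hb
    unfold ChuWD ChuTens
    calc op (op a.1 b.1) (res b.1 a.2 ⊓ res a.1 b.2)
        ≤ op (op a.1 b.1) (res b.1 a.2) := op_mono le_rfl inf_le_left
      _ = op a.1 (op (res b.1 a.2) b.1) := by rw [op_assoc, op_comm b.1]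
      _ ≤ op a.1 a.2 := op_mono le_rfl (ev _ _)
      _ ≤ k := ha
  · show op i k ≤ k
    rw [op_comm, op_unit]
  · intro a ha
    show op a.2 a.1 ≤ k
    rw [op_comm]; exact ha
  · intro a a' b b' ha hb
    exact ⟨op_mono ha.1 hb.1,
      le_inf (inf_le_left.trans ((anti1 _ hb.1).trans (mono2 _ ha.2)))
        (inf_le_right.trans ((anti1 _ ha.1).trans (mono2 _ hb.2)))⟩
  · intro a b
    unfold ChuTens
    rw [op_comm, inf_comm]
  · intro a b c _ _ _
    have key : ChuTens op res (ChuTens op res a b) c = ChuTens op res a (ChuTens op res b c) := by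
      unfold ChuTens
      dsimp only
      refine Prod.ext (op_assoc _ _ _) ?_
      rw [res_inf, res_inf]
      simp only [← curry]
      rw [op_comm c.1 b.1, op_comm c.1 a.1, inf_assoc]
    rw [key]
    exact ⟨⟨le_rfl, le_rfl⟩, ⟨le_rfl, le_rfl⟩⟩
  · intro a ha
    have key : ChuTens op res a (i, k) = (a.1, a.2 ⊓ res a.1 k) := by
      unfold ChuTens
      dsimp only
      rw [op_unit, res_unit]
    rw [key]
    refine ⟨⟨le_rfl, le_inf le_rfl ?_⟩, ⟨le_rfl, inf_le_left⟩⟩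
    refine (residuated _ _ _).mp ?_
    rw [op_comm]; exact ha
  · exact fun a b hab => ⟨hab.2, hab.1⟩
  · intro a; rfl
  · intro a b c _ _ _
    unfold ChuLE ChuTens ChuNeg
    dsimp only
    constructor
    · rintro ⟨h1, h2⟩
      have hc1 := h2.trans inf_le_left
      have hc2 := h2.trans inf_le_right
      refine ⟨le_inf ?_ ((residuated _ _ _).mp h1), ?_⟩
      · refine (residuated _ _ _).mp ?_
        rw [op_comm]
        exact (residuated _ _ _).mpr hc2
      · rw [op_comm]
        exact (residuated _ _ _).mpr hc1
    · rintro ⟨h1, h2⟩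
      have ha1 := h1.trans inf_le_left
      have ha2 := h1.trans inf_le_right
      refine ⟨(residuated _ _ _).mpr ha2, le_inf ?_ ?_⟩
      · refine (residuated _ _ _).mp ?_
        rw [op_comm]
        exact h2
      · refine (residuated _ _ _).mp ?_
        rw [op_comm]
        exact (residuated _ _ _).mpr ha1
end

section
/- Let (◁, j) be a pomonoid on (A, ≤) such that (•, i) is duoidal over (◁, j), k ◁ k ≤ k, and j • j ≤ j ≤ k. Then (x⁺, x⁻) ◁ (y⁺, y⁻) := (x⁺ ◁ y⁺, x⁻ ◁ y⁻) is well-defined on Chu(A, k) (i.e., (x⁺ ◁ y⁺) • (x⁻ ◁ y⁻) ≤ k), and together with J = (j, j) forms a pomonoid on Chu(A, k) that is self-dual: ¬(x ◁ y) = (¬x) ◁ (¬y). -/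
/-- The componentwise `◁` on Chu pairs. -/
def ChuTri {A : Type*} (tri : A → A → A) (a b : A × A) : A × A :=
  (tri a.1 b.1, tri a.2 b.2)

/-- If `(•, i)` is duoidal over `(◁, j)`, `k ◁ k ≤ k` and
`j • j ≤ j ≤ k`, then the componentwise `◁` with unit `(j, j)` is a
well-defined self-dual pomonoid on `Chu(A, k)`. -/
theorem stmt17 {A : Type*} [SemilatticeInf A]
    (op : A → A → A) (i : A) (res : A → A → A) (k : A)
    (tri : A → A → A) (j : A)
    (op_mono : ∀ {x x' y y'}, x ≤ x' → y ≤ y' → op x y ≤ op x' y')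
    (op_assoc : ∀ x y z, op (op x y) z = op x (op y z))
    (op_comm : ∀ x y, op x y = op y x)
    (op_unit : ∀ x, op x i = x)
    (residuated : ∀ x y z, op x y ≤ z ↔ x ≤ res y z)
    (tri_mono : ∀ {x x' y y'}, x ≤ x' → y ≤ y' → tri x y ≤ tri x' y')
    (tri_assoc : ∀ x y z, tri (tri x y) z = tri x (tri y z))
    (tri_unitr : ∀ x, tri x j = x)
    (tri_unitl : ∀ x, tri j x = x)
    (duoidal : ∀ w x y z, op (tri w x) (tri y z) ≤ tri (op w y) (op x z))
    (duo_j : op j j ≤ j)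
    (duo_i : i ≤ tri i i)
    (duo_ij : i ≤ j)
    (k_tri : tri k k ≤ k)
    (j_le_k : j ≤ k) :
    (∀ a b : A × A, ChuWD op k a → ChuWD op k b → ChuWD op k (ChuTri tri a b)) ∧
    ChuWD op k ((j, j) : A × A) ∧
    (∀ a a' b b' : A × A, ChuLE a a' → ChuLE b b' →
      ChuLE (ChuTri tri a b) (ChuTri tri a' b')) ∧
    (∀ a b c : A × A, ChuTri tri (ChuTri tri a b) c = ChuTri tri a (ChuTri tri b c)) ∧
    (∀ a : A × A, ChuTri tri a (j, j) = a) ∧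
    (∀ a : A × A, ChuTri tri (j, j) a = a) ∧
    (∀ a b : A × A, ChuNeg (ChuTri tri a b) = ChuTri tri (ChuNeg a) (ChuNeg b)) := by
  refine ⟨?_, ?_, ?_, ?_, ?_, ?_, ?_⟩
  · intro a b ha hb
    calc op (tri a.1 b.1) (tri a.2 b.2) ≤ tri (op a.1 a.2) (op b.1 b.2) := duoidal _ _ _ _
      _ ≤ tri k k := tri_mono ha hb
      _ ≤ k := k_tri
  · exact le_trans duo_j j_le_k
  · intro a a' b b' ha hb
    exact ⟨tri_mono ha.1 hb.1, tri_mono ha.2 hb.2⟩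
  · intro a b c; simp [ChuTri, tri_assoc]
  · intro a; simp [ChuTri, tri_unitr]
  · intro a; simp [ChuTri, tri_unitl]
  · intro a b; rfl
end

section
/- If (•, j) is duoidal over (◁, j) on a poset (A, ≤) and (•, j) has a residual ⊸, then (w ⊸ x) ◁ (y ⊸ z) ≤ (w ◁ y) ⊸ (x ◁ z). -/
/-- If `(•, j)` is duoidal over `(◁, j)` and `•` has a residual
`⊸`, then `(w ⊸ x) ◁ (y ⊸ z) ≤ (w ◁ y) ⊸ (x ◁ z)`. -/
theorem stmt18 {A : Type*} [PartialOrder A]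
    (op : A → A → A) (j : A) (res : A → A → A) (tri : A → A → A)
    (op_mono : ∀ {x x' y y'}, x ≤ x' → y ≤ y' → op x y ≤ op x' y')
    (op_assoc : ∀ x y z, op (op x y) z = op x (op y z))
    (op_comm : ∀ x y, op x y = op y x)
    (op_unit : ∀ x, op x j = x)
    (residuated : ∀ x y z, op x y ≤ z ↔ x ≤ res y z)
    (tri_mono : ∀ {x x' y y'}, x ≤ x' → y ≤ y' → tri x y ≤ tri x' y')
    (tri_assoc : ∀ x y z, tri (tri x y) z = tri x (tri y z))
    (tri_unitr : ∀ x, tri x j = x)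
    (tri_unitl : ∀ x, tri j x = x)
    (duoidal : ∀ w x y z, op (tri w x) (tri y z) ≤ tri (op w y) (op x z)) :
    ∀ w x y z, tri (res w x) (res y z) ≤ res (tri w y) (tri x z) := by
  intro w x y z
  rw [← residuated]
  calc op (tri (res w x) (res y z)) (tri w y)
      ≤ tri (op (res w x) w) (op (res y z) y) := duoidal _ _ _ _
    _ ≤ tri x z :=
        tri_mono ((residuated _ _ _).2 le_rfl) ((residuated _ _ _).2 le_rfl)
end

section
/- If (•, i) is duoidal over (◁, j) on (A, ≤) with k ◁ k ≤ k and j ≤ k, then the Chu tensor (a⁺,a⁻) ⊗ (b⁺,b⁻) = (a⁺ • b⁺, (b⁺ ⊸ a⁻) ∧ (a⁺ ⊸ b⁻)) with unit (i, k) is duoidal over the componentwise operation (x⁺,x⁻) ◁ (y⁺,y⁻) = (x⁺ ◁ y⁺, x⁻ ◁ y⁻) with unit (j, j) on Chu(A, k): in particular (w ◁ x) ⊗ (y ◁ z) ⊑ (w ⊗ y) ◁ (x ⊗ z). -/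
/-- If `(•, i)` is duoidal over `(◁, j)` with `k ◁ k ≤ k` and
`j ≤ k`, then the Chu tensor with unit `(i, k)` is duoidal over the
componentwise `◁` with unit `(j, j)` on `Chu(A, k)`; in particular
`(w ◁ x) ⊗ (y ◁ z) ⊑ (w ⊗ y) ◁ (x ⊗ z)`. -/
theorem stmt19 {A : Type*} [Lattice A]
    (op : A → A → A) (i : A) (res : A → A → A) (k : A)
    (tri : A → A → A) (j : A)
    (op_mono : ∀ {x x' y y'}, x ≤ x' → y ≤ y' → op x y ≤ op x' y')
    (op_assoc : ∀ x y z, op (op x y) z = op x (op y z))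
    (op_comm : ∀ x y, op x y = op y x)
    (op_unit : ∀ x, op x i = x)
    (residuated : ∀ x y z, op x y ≤ z ↔ x ≤ res y z)
    (tri_mono : ∀ {x x' y y'}, x ≤ x' → y ≤ y' → tri x y ≤ tri x' y')
    (tri_assoc : ∀ x y z, tri (tri x y) z = tri x (tri y z))
    (tri_unitr : ∀ x, tri x j = x)
    (tri_unitl : ∀ x, tri j x = x)
    (duoidal : ∀ w x y z, op (tri w x) (tri y z) ≤ tri (op w y) (op x z))
    (duo_j : op j j ≤ j)
    (duo_i : i ≤ tri i i)
    (duo_ij : i ≤ j)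
    (k_tri : tri k k ≤ k)
    (j_le_k : j ≤ k) :
    (∀ w x y z : A × A, ChuWD op k w → ChuWD op k x → ChuWD op k y → ChuWD op k z →
      ChuLE (ChuTens op res (ChuTri tri w x) (ChuTri tri y z))
            (ChuTri tri (ChuTens op res w y) (ChuTens op res x z))) ∧
    ChuLE (ChuTens op res ((j, j) : A × A) (j, j)) (j, j) ∧
    ChuLE ((i, k) : A × A) (ChuTri tri (i, k) (i, k)) ∧
    ChuLE ((i, k) : A × A) (j, j) := by
  refine ⟨?_, ⟨duo_j, le_inf ((residuated _ _ _).1 duo_j) ((residuated _ _ _).1 duo_j)⟩,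
    ⟨duo_i, k_tri⟩, ⟨duo_ij, j_le_k⟩⟩
  rintro ⟨w1, w2⟩ ⟨x1, x2⟩ ⟨y1, y2⟩ ⟨z1, z2⟩ _ _ _ _
  refine ⟨duoidal _ _ _ _, le_inf ?_ ?_⟩
  · refine (residuated _ _ _).1 ((duoidal _ _ _ _).trans (tri_mono ?_ ?_))
    · exact (residuated _ _ _).2 inf_le_left
    · exact (residuated _ _ _).2 inf_le_left
  · refine (residuated _ _ _).1 ((duoidal _ _ _ _).trans (tri_mono ?_ ?_))
    · exact (residuated _ _ _).2 inf_le_right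
    · exact (residuated _ _ _).2 inf_le_right
end
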